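/- Let F, Ĝ: ℝⁿ → ℝ be C¹ functions on a compact convex set C with Ĝ ≥ F on C, and suppose |∇F| ≥ cβ > 0 in a neighborhood of {F = 1} ∪ {Ĝ = 1} in C, and sup_C (Ĝ − F) ≤ Ce^{−√β}. If u ∈ C with Ĝ(u) = 1 and the forward gradient flow of F starting at u stays in C and reaches a point u' with F(u') = 1, then dist(u, u') ≤ (C/c)·β^{−1}·e^{−√β}. -/

import Mathlib

/-! The normalized gradient flow of `F` has unit speed while `F` grows along it at rate `‖∇F‖ ≥ cβ`.
So the flow time `t` from `u` to `u'` satisfies both `dist u u' ≤ t` and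
`cβ t ≤ F u' - F u = G u - F u ≤ CC e^{-√β}`. -/

open Set

section GradientFlow

variable {E : Type*} [NormedAddCommGroup E] [InnerProductSpace ℝ E]

theorem real_inner_inv_norm_smul_self (v : E) : inner ℝ v (‖v‖⁻¹ • v) = ‖v‖ := by
  rcases eq_or_ne v 0 with rfl | hv
  · simp
  · rw [real_inner_smul_right, real_inner_self_eq_norm_mul_norm, ← mul_assoc,
      inv_mul_cancel₀ (norm_ne_zero_iff.mpr hv), one_mul]

theorem norm_inv_norm_smul_self_le_one (v : E) : ‖‖v‖⁻¹ • v‖ ≤ 1 := by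
  rcases eq_or_ne v 0 with rfl | hv
  · simp
  · exact (norm_smul_inv_norm hv).le

theorem HasGradientAt.hasDerivAt_comp_normalized [CompleteSpace E] {F : E → ℝ} {γ : ℝ → E} {g : E} {s : ℝ}
    (hF : HasGradientAt F g (γ s)) (hγ : HasDerivAt γ (‖g‖⁻¹ • g) s) :
    HasDerivAt (F ∘ γ) ‖g‖ s := by
  have h := hF.hasFDerivAt.comp_hasDerivAt s hγ
  rwa [InnerProductSpace.toDual_apply_apply, real_inner_inv_norm_smul_self] at h

theorem mul_sub_le_image_sub_of_hasDerivAt_Icc {f f' : ℝ → ℝ} {a b m : ℝ} (hab : a ≤ b)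
    (hf : ∀ s ∈ Icc a b, HasDerivAt f (f' s) s) (hm : ∀ s ∈ Icc a b, m ≤ f' s) :
    m * (b - a) ≤ f b - f a := by
  refine (convex_Icc a b).mul_sub_le_image_sub_of_le_deriv
    (fun s hs => (hf s hs).continuousAt.continuousWithinAt)
    (fun s hs => (hf s (interior_subset hs)).differentiableAt.differentiableWithinAt)
    (fun s hs => ?_) a (left_mem_Icc.mpr hab) b (right_mem_Icc.mpr hab) hab
  rw [(hf s (interior_subset hs)).deriv]
  exact hm s (interior_subset hs)

theorem dist_le_of_hasDerivAt_norm_le_one {γ γ' : ℝ → E} {a b : ℝ} (hab : a ≤ b)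
    (hγ : ∀ s ∈ Icc a b, HasDerivAt γ (γ' s) s) (hγ' : ∀ s ∈ Icc a b, ‖γ' s‖ ≤ 1) :
    dist (γ a) (γ b) ≤ b - a := by
  rw [dist_comm, dist_eq_norm, ← one_mul (b - a)]
  exact norm_image_sub_le_of_norm_deriv_le_segment' (fun s hs => (hγ s hs).hasDerivWithinAt)
    (fun s hs => hγ' s (Ico_subset_Icc_self hs)) b (right_mem_Icc.mpr hab)

theorem mul_dist_le_sub_of_normalized_gradient_flow [CompleteSpace E] {F : E → ℝ} {γ : ℝ → E} {a b m : ℝ}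
    (hab : a ≤ b) (hm : 0 ≤ m) (hF : ∀ s ∈ Icc a b, DifferentiableAt ℝ F (γ s))
    (hγ : ∀ s ∈ Icc a b, HasDerivAt γ (‖gradient F (γ s)‖⁻¹ • gradient F (γ s)) s)
    (hgrad : ∀ s ∈ Icc a b, m ≤ ‖gradient F (γ s)‖) :
    m * dist (γ a) (γ b) ≤ F (γ b) - F (γ a) := by
  have hdist : dist (γ a) (γ b) ≤ b - a :=
    dist_le_of_hasDerivAt_norm_le_one hab hγ fun s _ => norm_inv_norm_smul_self_le_one _
  have hgrowth : m * (b - a) ≤ (F ∘ γ) b - (F ∘ γ) a :=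
    mul_sub_le_image_sub_of_hasDerivAt_Icc hab
      (fun s hs => (hF s hs).hasGradientAt.hasDerivAt_comp_normalized (hγ s hs)) hgrad
  exact (mul_le_mul_of_nonneg_left hdist hm).trans hgrowth

end GradientFlow

theorem stmt_17_general {n : ℕ} (F G : EuclideanSpace ℝ (Fin n) → ℝ)
    (C : Set (EuclideanSpace ℝ (Fin n)))
    (c CC β : ℝ) (hc : 0 < c) (hβ : 0 < β)
    (hF : ContDiff ℝ 1 F)
    (hsub : ∀ u ∈ C, G u - F u ≤ CC * Real.exp (-Real.sqrt β))
    (u u' : EuclideanSpace ℝ (Fin n)) (hu : u ∈ C)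
    (hGu : G u = 1) (hFu' : F u' = 1)
    -- γ is the unit-speed forward gradient flow of F from u to u', staying in C
    (γ : ℝ → EuclideanSpace ℝ (Fin n)) (t : ℝ) (ht : 0 ≤ t)
    (hγ0 : γ 0 = u) (hγt : γ t = u')
    (hflow : ∀ s ∈ Set.Icc 0 t,
      HasDerivAt γ ((‖gradient F (γ s)‖)⁻¹ • gradient F (γ s)) s)
    -- the gradient lower bound near the level sets, in particular along the flow
    (hgrad : ∀ s ∈ Set.Icc 0 t, c * β ≤ ‖gradient F (γ s)‖) :
    dist u u' ≤ (CC / c) * β⁻¹ * Real.exp (-Real.sqrt β) := by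
  have hcβ : 0 < c * β := mul_pos hc hβ
  have hflow_bound : c * β * dist u u' ≤ G u - F u := by
    rw [hGu, ← hFu', ← hγ0, ← hγt]
    exact mul_dist_le_sub_of_normalized_gradient_flow ht hcβ.le
      (fun s _ => hF.differentiable one_ne_zero _) hflow hgrad
  calc dist u u' ≤ CC * Real.exp (-Real.sqrt β) / (c * β) := by
        rw [le_div_iff₀ hcβ, mul_comm]
        exact hflow_bound.trans (hsub u hu)
    _ = (CC / c) * β⁻¹ * Real.exp (-Real.sqrt β) := by
        field_simp

theorem stmt_17 {n : ℕ} (F G : EuclideanSpace ℝ (Fin n) → ℝ)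
    (C : Set (EuclideanSpace ℝ (Fin n)))
    (c CC β : ℝ) (hc : 0 < c) (hCC : 0 < CC) (hβ : 0 < β)
    (hconv : Convex ℝ C) (hcomp : IsCompact C)
    (hF : ContDiff ℝ 1 F) (hG : ContDiff ℝ 1 G)
    (hge : ∀ u ∈ C, F u ≤ G u)
    (hsub : ∀ u ∈ C, G u - F u ≤ CC * Real.exp (-Real.sqrt β))
    (u u' : EuclideanSpace ℝ (Fin n)) (hu : u ∈ C)
    (hGu : G u = 1) (hFu' : F u' = 1)
    -- γ is the unit-speed forward gradient flow of F from u to u', staying in C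
    (γ : ℝ → EuclideanSpace ℝ (Fin n)) (t : ℝ) (ht : 0 ≤ t)
    (hγ0 : γ 0 = u) (hγt : γ t = u')
    (hin : ∀ s ∈ Set.Icc 0 t, γ s ∈ C)
    (hflow : ∀ s ∈ Set.Icc 0 t,
      HasDerivAt γ ((‖gradient F (γ s)‖)⁻¹ • gradient F (γ s)) s)
    -- the gradient lower bound near the level sets, in particular along the flow
    (hgrad : ∀ s ∈ Set.Icc 0 t, c * β ≤ ‖gradient F (γ s)‖) :
    dist u u' ≤ (CC / c) * β⁻¹ * Real.exp (-Real.sqrt β) :=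
  stmt_17_general F G C c CC β hc hβ hF hsub u u' hu hGu hFu' γ t ht hγ0 hγt hflow hgrad
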